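/- arXiv:1607.02790 — 5 statements merged into one kernel-verified Lean document; each statement's English description precedes it below -/
import Mathlib

section
/- For every ρ ∈ D(Fin n) and every a ∈ A, hyper normalisation satisfies N(st₁(ρ, a)) = st₁(ρ, η(a)); explicitly, N applied to the distribution (i,a') ↦ (ρ(i) if a' = a, else 0) equals the distribution on Fin n × D(A) assigning ρ(i) to (i, η(a)) for each i. -/
/-! st₁(ρ, a) is the joint distribution `ρ ⊗ f` of ρ with the constant kernel `f = η(a)`.
Hyper normalisation undoes the formation of any such joint distribution: the first marginal of
`ρ ⊗ f` is ρ, and wherever ρ(i) ≠ 0 its normalised i-th component is ρ(i)·f(i)/ρ(i) = f(i),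
so `N(ρ ⊗ f)` is the pushforward of ρ along `i ↦ (i, f i)`. -/

open scoped ENNReal

noncomputable section

namespace HyperNorm

variable {A B : Type*} {n m : ℕ}

/-- `ω[i] = Σ_a ω(i,a)`. -/
def fmass (ω : PMF (Fin n × A)) (i : Fin n) : ℝ≥0∞ := ∑' a, ω (i, a)

lemma tsum_fmass (ω : PMF (Fin n × A)) : ∑' i, fmass ω i = 1 := by
  simp only [fmass]
  rw [← ENNReal.tsum_prod']
  exact ω.tsum_coe

lemma fmass_ne_top (ω : PMF (Fin n × A)) (i : Fin n) : fmass ω i ≠ ⊤ := by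
  apply ne_top_of_le_ne_top ENNReal.one_ne_top
  rw [← tsum_fmass ω]
  exact ENNReal.le_tsum i

/-- The first marginal `i ↦ ω[i]` as a distribution. -/
def fstM (ω : PMF (Fin n × A)) : PMF (Fin n) :=
  ⟨fun i => fmass ω i, ENNReal.summable.hasSum_iff.mpr (tsum_fmass ω)⟩

/-- The normalised `i`-th component `ω_i(a) = ω(i,a)/ω[i]` (junk value if `ω[i] = 0`,
which never contributes to `hnorm` below since it is weighted by `ω[i] = 0`). -/
def ncond (ω : PMF (Fin n × A)) (i : Fin n) : PMF A :=
  if h : fmass ω i ≠ 0 then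
    ⟨fun a => ω (i, a) / fmass ω i,
      ENNReal.summable.hasSum_iff.mpr (by
        simp only [div_eq_mul_inv]
        rw [ENNReal.tsum_mul_right, ← div_eq_mul_inv]
        exact ENNReal.div_self h (fmass_ne_top ω i))⟩
  else PMF.pure (ω.support_nonempty.some.2)

/-- Hyper normalisation `N(ω) = Σ_{i with ω[i] ≠ 0} ω[i]·η(i, ω_i)`. -/
def hnorm (ω : PMF (Fin n × A)) : PMF (Fin n × PMF A) :=
  (fstM ω).bind fun i => PMF.pure (i, ncond ω i)

/-- Graph map `gr(f)(x)(y,x') = f(x)(y) if x' = x, else 0`. -/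
def gr {X Y : Type*} (f : X → PMF Y) : X → PMF (Y × X) :=
  fun x => (f x).map fun y => (y, x)

def compProd (ρ : PMF (Fin n)) (f : Fin n → PMF A) : PMF (Fin n × A) :=
  ρ.bind fun i => (f i).map (Prod.mk i)

lemma map_prodMk_apply {X Y : Type*} [DecidableEq X] (p : PMF Y) (x x' : X) (y : Y) :
    p.map (Prod.mk x) (x', y) = if x' = x then p y else 0 := by
  rw [PMF.map_apply, tsum_eq_single y (fun b hb => by simp [Ne.symm hb])]
  simp [eq_comm]

lemma compProd_apply (ρ : PMF (Fin n)) (f : Fin n → PMF A) (i : Fin n) (a : A) :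
    compProd ρ f (i, a) = ρ i * f i a := by
  rw [compProd, PMF.bind_apply,
    tsum_eq_single i fun j hj => by rw [map_prodMk_apply, if_neg hj.symm, mul_zero],
    map_prodMk_apply, if_pos rfl]

lemma fmass_compProd (ρ : PMF (Fin n)) (f : Fin n → PMF A) (i : Fin n) :
    fmass (compProd ρ f) i = ρ i := by
  simp only [fmass, compProd_apply, ENNReal.tsum_mul_left, PMF.tsum_coe, mul_one]

lemma fstM_compProd (ρ : PMF (Fin n)) (f : Fin n → PMF A) : fstM (compProd ρ f) = ρ :=
  PMF.ext (fmass_compProd ρ f)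

lemma ncond_apply_of_ne_zero (ω : PMF (Fin n × A)) {i : Fin n} (h : fmass ω i ≠ 0) (a : A) :
    ncond ω i a = ω (i, a) / fmass ω i := by
  erw [ncond, dif_pos h]
  rfl

lemma ncond_compProd (ρ : PMF (Fin n)) (f : Fin n → PMF A) {i : Fin n} (h : ρ i ≠ 0) :
    ncond (compProd ρ f) i = f i := by
  ext a
  rw [ncond_apply_of_ne_zero _ (by rwa [fmass_compProd]), compProd_apply, fmass_compProd,
    mul_comm, ENNReal.mul_div_cancel_right h (ρ.apply_ne_top i)]

lemma bind_congr_of_mem_support {X Y : Type*} (p : PMF X) {f g : X → PMF Y}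
    (h : ∀ x ∈ p.support, f x = g x) : p.bind f = p.bind g := by
  ext y
  simp only [PMF.bind_apply]
  refine tsum_congr fun x => ?_
  by_cases hx : x ∈ p.support
  · rw [h x hx]
  · rw [PMF.apply_eq_zero_iff p x |>.mpr hx, zero_mul, zero_mul]

theorem hnorm_compProd (ρ : PMF (Fin n)) (f : Fin n → PMF A) :
    hnorm (compProd ρ f) = ρ.map fun i => (i, f i) := by
  rw [hnorm, fstM_compProd, ← PMF.bind_pure_comp]
  exact bind_congr_of_mem_support ρ fun i hi => by
    rw [ncond_compProd ρ f ((PMF.mem_support_iff ρ i).mp hi)]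
    rfl

lemma map_prodMk_right_eq_compProd (ρ : PMF (Fin n)) (a : A) :
    (ρ.map fun i => (i, a)) = compProd ρ fun _ => PMF.pure a := by
  simp only [compProd, PMF.pure_map]
  rfl

/-- `N(st₁(ρ, a)) = st₁(ρ, η(a))`. -/
theorem hnorm_st1 (ρ : PMF (Fin n)) (a : A) :
    hnorm (ρ.map fun i => (i, a)) = ρ.map fun i => (i, PMF.pure a) := by
  rw [map_prodMk_right_eq_compProd, hnorm_compProd]

end HyperNorm
end
end

section
/- Hyper normalisation is idempotent: for every ω ∈ D(Fin n × A), N(N(ω)) = D(id × η)(N(ω)), where the outer N is the hyper normalisation D(Fin n × D(A)) → D(Fin n × D(D(A))) and id × η : Fin n × D(A) → Fin n × D(D(A)) sends (i,φ) to (i, η(φ)). Consequently D(id × μ)(N(N(ω))) = N(ω). -/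
open scoped ENNReal

noncomputable section

namespace HyperNorm

variable {A B : Type*} {n m : ℕ}

/-! `N(ω)` is the pushforward of the first marginal of `ω` along the graph `i ↦ (i, ω_i)`.
A distribution of this graph form has that same first marginal, and its normalised components
at every `i` of positive mass are the point masses `η(ω_i)`; applying `N` to `N(ω)` therefore
only replaces each `ω_i` by `η(ω_i)`, and `μ ∘ η = id` undoes this. -/

theorem _root_.PMF.map_congr_of_mem_support {α β : Type*} {p : PMF α} {f g : α → β}
    (h : ∀ a ∈ p.support, f a = g a) : p.map f = p.map g := by
  ext b
  simp only [PMF.map_apply]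
  refine tsum_congr fun a => ?_
  by_cases ha : a ∈ p.support
  · rw [h a ha]
  · simp [(PMF.apply_eq_zero_iff p a).2 ha]

lemma fstM_eq_map_fst (ω : PMF (Fin n × A)) : fstM ω = ω.map Prod.fst := by
  ext i
  change fmass ω i = _
  rw [PMF.map_apply, ENNReal.tsum_prod', fmass, tsum_eq_single i]
  · simp
  · intro j hj
    simp [Ne.symm hj]

lemma hnorm_eq_map (ω : PMF (Fin n × A)) :
    hnorm ω = (fstM ω).map fun i => (i, ncond ω i) :=
  PMF.bind_pure_comp _ _

lemma ncond_apply {ω : PMF (Fin n × A)} {i : Fin n} (hi : fmass ω i ≠ 0) (a : A) :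
    ncond ω i a = ω (i, a) / fmass ω i :=
  DFunLike.congr_fun (dif_pos hi : ncond ω i = _) a

section Graph

variable (p : PMF (Fin n)) (f : Fin n → A)

lemma fstM_map_graph : fstM (p.map fun i => (i, f i)) = p := by
  rw [fstM_eq_map_fst, PMF.map_comp]
  exact PMF.map_id p

lemma map_graph_apply (j : Fin n) (a : A) :
    (p.map fun i => (i, f i)) (j, a) = PMF.pure (f j) a * p j := by
  rw [PMF.map_apply, tsum_eq_single j]
  · by_cases ha : a = f j <;> simp [ha, PMF.pure_apply]
  · intro i hi
    simp [Prod.ext_iff, Ne.symm hi]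

lemma ncond_map_graph {j : Fin n} (hj : p j ≠ 0) :
    ncond (p.map fun i => (i, f i)) j = PMF.pure (f j) := by
  have hmass : fmass (p.map fun i => (i, f i)) j = p j :=
    DFunLike.congr_fun (fstM_map_graph p f) j
  ext a
  rw [ncond_apply (hmass ▸ hj), map_graph_apply, hmass,
    ENNReal.mul_div_cancel_right hj (p.apply_ne_top j)]

end Graph

/-- hyper normalisation is idempotent: `N(N(ω)) = D(id × η)(N(ω))`,
and consequently `D(id × μ)(N(N(ω))) = N(ω)`. -/
theorem hnorm_idem (ω : PMF (Fin n × A)) :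
    hnorm (hnorm ω) = (hnorm ω).map (fun p => (p.1, PMF.pure p.2)) ∧
    (hnorm (hnorm ω)).map (fun p => (p.1, p.2.bind id)) = hnorm ω := by
  have idem : hnorm (hnorm ω) = (hnorm ω).map (fun p => (p.1, PMF.pure p.2)) :=
    calc hnorm (hnorm ω)
        = (fstM ω).map (fun i => (i, ncond ((fstM ω).map fun i => (i, ncond ω i)) i)) := by
          rw [hnorm_eq_map (hnorm ω), hnorm_eq_map ω, fstM_map_graph]
      _ = (fstM ω).map (fun i => (i, PMF.pure (ncond ω i))) :=
          PMF.map_congr_of_mem_support fun i hi => by rw [ncond_map_graph _ _ hi]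
      _ = (hnorm ω).map (fun p => (p.1, PMF.pure p.2)) := by
          rw [hnorm_eq_map ω, PMF.map_comp]
          rfl
  refine ⟨idem, ?_⟩
  rw [idem, PMF.map_comp]
  convert PMF.map_id (hnorm ω) using 2
  funext p
  simp only [Function.comp_apply, PMF.pure_bind, id]

end HyperNorm
end
end

section
/- Hyper normalisation is a split monomorphism: for every ω ∈ D(Fin n × A), (st₂)_*(N(ω)) = ω, where st₂ : Fin n × D(A) → D(Fin n × A) is the strength map and (st₂)_* its Kleisli extension D(Fin n × D(A)) → D(Fin n × A). -/
open scoped ENNReal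

noncomputable section

namespace HyperNorm

variable {A B : Type*} {n m : ℕ}

lemma _root_.PMF.map_apply_of_injective {α β : Type*} {f : α → β} (hf : Function.Injective f)
    (p : PMF α) (a : α) : p.map f (f a) = p a := by
  rw [PMF.map_apply, tsum_eq_single a (fun b hb => if_neg (hf.ne hb).symm), if_pos rfl]

lemma _root_.PMF.bind_map_prodMk_apply {X Y : Type*} (p : PMF X) (f : X → PMF Y) (x : X) (y : Y) :
    (p.bind fun x' => (f x').map (Prod.mk x')) (x, y) = p x * f x y := by
  rw [PMF.bind_apply, tsum_eq_single x, PMF.map_apply_of_injective (Prod.mk_right_injective x)]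
  intro x' hx'
  rw [PMF.map_apply,
    ENNReal.tsum_eq_zero.mpr fun y' => if_neg fun h => hx' (congrArg Prod.fst h).symm, mul_zero]

lemma fmass_mul_ncond (ω : PMF (Fin n × A)) (i : Fin n) (a : A) :
    fmass ω i * ncond ω i a = ω (i, a) := by
  by_cases h : fmass ω i = 0
  · -- `ω[i] = 0` forces `ω (i, a) = 0`, so the junk value of `ncond` is irrelevant.
    rw [h, zero_mul, eq_comm, ← nonpos_iff_eq_zero, ← h]
    exact ENNReal.le_tsum a
  · rw [show ncond ω i = _ from dif_pos h]
    exact ENNReal.mul_div_cancel h (fmass_ne_top ω i)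

/-- hyper normalisation is a split mono: `(st₂)_*(N(ω)) = ω`. -/
theorem hnorm_split_mono (ω : PMF (Fin n × A)) :
    (hnorm ω).bind (fun p => p.2.map fun a => (p.1, a)) = ω := by
  ext ⟨i, a⟩
  rw [hnorm, PMF.bind_bind]
  simp only [PMF.pure_bind]
  exact (PMF.bind_map_prodMk_apply _ _ i a).trans (fmass_mul_ncond ω i a)

end HyperNorm
end
end

section
/- The prior is recovered from the hyper conditional: for every ω ∈ D(A) and every n-test t : A → D(Fin n), μ(D(π₂)(ω‖t)) = ω, where π₂ : Fin n × D(A) → D(A) is the second projection, so that flattening the second marginal of ω‖t yields ω. -/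
open scoped ENNReal

noncomputable section

namespace HyperNorm

variable {A B : Type*} {n m : ℕ}

lemma map_snd_bind_gr {X Y : Type*} (ω : PMF X) (f : X → PMF Y) :
    (ω.bind (gr f)).map Prod.snd = ω := by
  simp only [PMF.map_bind, gr, PMF.map_comp, Function.comp_def]
  exact (congrArg ω.bind (funext fun x => PMF.map_const (f x) x)).trans (PMF.bind_pure ω)

lemma map_snd_apply {X : Type*} (ω : PMF (X × A)) (a : A) :
    ω.map Prod.snd a = ∑' i, ω (i, a) := by
  rw [PMF.map_apply, ENNReal.tsum_prod']
  refine tsum_congr fun i => ?_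
  rw [tsum_eq_single a (fun b hb => if_neg (Ne.symm hb))]
  exact if_pos rfl

theorem bind_id_map_snd_hnorm (ω : PMF (Fin n × A)) :
    ((hnorm ω).map Prod.snd).bind id = ω.map Prod.snd := by
  ext a
  simp only [hnorm, PMF.map_bind, PMF.pure_map, PMF.bind_bind, PMF.pure_bind, id]
  rw [PMF.bind_apply, map_snd_apply]
  exact tsum_congr (fmass_mul_ncond ω · a)

/-- the prior is recovered from the hyper conditional:
`μ(D(π₂)(ω‖t)) = ω`, where `ω‖t = N(gr(t)_*(ω))`. -/
theorem hypcond_recover_prior (ω : PMF A) (t : A → PMF (Fin n)) :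
    ((hnorm (ω.bind (gr t))).map Prod.snd).bind id = ω := by
  rw [bind_id_map_snd_hnorm, map_snd_bind_gr]

end HyperNorm
end
end

section
/- The test is recovered from the hyper conditional: for every ω ∈ D(A) and every n-test t : A → D(Fin n), (st₂)_*(ω‖t) = gr(t)_*(ω) in D(Fin n × A). Consequently, if ω(a) ≠ 0 for all a ∈ A, then for any two n-tests s, t : A → D(Fin n), ω‖s = ω‖t implies s = t. -/
open scoped ENNReal

noncomputable section

namespace HyperNorm

variable {A B : Type*} {n m : ℕ}

lemma _root_.PMF.map_apply_of_notMem_range {α β : Type*} {f : α → β} {b : β}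
    (hb : b ∉ Set.range f) (p : PMF α) : p.map f b = 0 := by
  rw [PMF.map_apply]
  exact ENNReal.tsum_eq_zero.mpr fun a => if_neg fun h => hb ⟨a, h.symm⟩

lemma _root_.PMF.bind_map_pair_apply {X Y : Type*} (p : PMF X) (q : X → PMF Y) (x : X) (y : Y) :
    (p.bind fun x => (q x).map fun y => (x, y)) (x, y) = p x * q x y := by
  rw [PMF.bind_apply, tsum_eq_single x, PMF.map_apply_of_injective (Prod.mk_right_injective x)]
  intro x' hx'
  rw [PMF.map_apply_of_notMem_range (by simpa using hx'), mul_zero]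

lemma bind_gr_apply {X Y : Type*} (p : PMF X) (f : X → PMF Y) (x : X) (y : Y) :
    p.bind (gr f) (y, x) = p x * f x y := by
  rw [PMF.bind_apply, tsum_eq_single x, gr, PMF.map_apply_of_injective (Prod.mk_left_injective x)]
  intro x' hx'
  rw [gr, PMF.map_apply_of_notMem_range (by simpa using hx'), mul_zero]

def st₂ {X Y : Type*} (p : X × PMF Y) : PMF (X × Y) :=
  p.2.map fun y => (p.1, y)

theorem hnorm_bind_st₂ (ω : PMF (Fin n × A)) : (hnorm ω).bind st₂ = ω := by
  ext ⟨i, a⟩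
  simp only [hnorm, PMF.bind_bind, PMF.pure_bind, st₂]
  rw [PMF.bind_map_pair_apply]
  exact fmass_mul_ncond ω i a

theorem hnorm_injective : Function.Injective (hnorm : PMF (Fin n × A) → PMF (Fin n × PMF A)) :=
  Function.LeftInverse.injective (g := fun ρ => ρ.bind st₂) fun ω => hnorm_bind_st₂ ω

theorem bind_gr_injective {ω : PMF A} (hω : ∀ a, ω a ≠ 0) :
    Function.Injective fun t : A → PMF B => ω.bind (gr t) := by
  intro s t hst
  funext a
  ext b
  have h := congrArg (fun ρ : PMF (B × A) => ρ (b, a)) hst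
  simp only [bind_gr_apply] at h
  exact (ENNReal.mul_right_inj (hω a) (ω.apply_ne_top a)).mp h

/-- `(st₂)_*(ω‖t) = gr(t)_*(ω)`; consequently, if `ω` has full support
then the test is recovered from the hyper conditional: `ω‖s = ω‖t → s = t`. -/
theorem hypcond_recover_test {A : Type*} {n : ℕ} :
    (∀ (ω : PMF A) (t : A → PMF (Fin n)),
        (hnorm (ω.bind (gr t))).bind (fun p => p.2.map fun a => (p.1, a)) =
          ω.bind (gr t)) ∧
    (∀ ω : PMF A, (∀ a, ω a ≠ 0) →
        ∀ s t : A → PMF (Fin n),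
          hnorm (ω.bind (gr s)) = hnorm (ω.bind (gr t)) → s = t) :=
  ⟨fun _ _ => hnorm_bind_st₂ _, fun _ hω _ _ h => bind_gr_injective hω (hnorm_injective h)⟩

end HyperNorm
end
end
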